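/- For σ, τ, m > 0 with m > 0, and B ≥ 2, the KS distance between the residual-transformed mixtures (1/(B−1)) Σ_{k=1}^{B−1} N(km, 2(σ²+τ²)) and (1/(B−1)) Σ_{k=1}^{B−1} N(km, 2σ²) is strictly less than the KS distance between the delta-transformed distributions N(m, 2(σ²+τ²)) and N(m, 2σ²), for B ≥ 3. Hence, for similar blocks of the first kind, the residual transformation yields a smaller maximum distributional distance (more exchangeability) than the delta transformation. -/

import Mathlib

open MeasureTheory

/-- The standard normal CDF `Φ`. -/
noncomputable def stdNormalCDF (x : ℝ) : ℝ :=
  ∫ t in Set.Iic x, Real.exp (-t ^ 2 / 2) / Real.sqrt (2 * Real.pi)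

open Set Filter

noncomputable section

noncomputable def stdGauss (t : ℝ) : ℝ := Real.exp (-t ^ 2 / 2) / Real.sqrt (2 * Real.pi)

lemma stdGauss_pos (t : ℝ) : 0 < stdGauss t :=
  div_pos (Real.exp_pos _) (Real.sqrt_pos.2 (by positivity))

lemma continuous_stdGauss : Continuous stdGauss := by
  unfold stdGauss; fun_prop

lemma integrable_stdGauss : Integrable stdGauss := by
  have h : Integrable (fun t : ℝ => Real.exp (-(1/2) * t ^ 2)) := integrable_exp_neg_mul_sq (by norm_num)
  have := h.div_const (Real.sqrt (2 * Real.pi))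
  refine this.congr (Filter.Eventually.of_forall fun t => ?_)
  unfold stdGauss; ring_nf

end

lemma stdNormalCDF_eq (x : ℝ) : stdNormalCDF x = ∫ t in Set.Iic x, stdGauss t := rfl

lemma hasDerivAt_stdNormalCDF (x : ℝ) : HasDerivAt stdNormalCDF (stdGauss x) x := by
  have key : stdNormalCDF = fun y => stdNormalCDF 0 + ∫ t in (0:ℝ)..y, stdGauss t := by
    funext y
    rw [stdNormalCDF_eq, stdNormalCDF_eq,
      ← intervalIntegral.integral_Iic_sub_Iic (integrable_stdGauss.integrableOn)
        (integrable_stdGauss.integrableOn)]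
    ring
  rw [key]
  have h2 : HasDerivAt (fun y => ∫ t in (0:ℝ)..y, stdGauss t) (stdGauss x) x :=
    intervalIntegral.integral_hasDerivAt_right
      integrable_stdGauss.intervalIntegrable
      (continuous_stdGauss.stronglyMeasurableAtFilter _ _)
      continuous_stdGauss.continuousAt
  simpa using h2.const_add (stdNormalCDF 0)

lemma continuous_stdNormalCDF : Continuous stdNormalCDF := by
  have : Differentiable ℝ stdNormalCDF := fun x => (hasDerivAt_stdNormalCDF x).differentiableAt
  exact this.continuous

lemma strictMono_stdNormalCDF : StrictMono stdNormalCDF :=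
  strictMono_of_deriv_pos (fun x => by
    rw [(hasDerivAt_stdNormalCDF x).deriv]; exact stdGauss_pos x)

noncomputable def stdGaussI : ℝ := ∫ t, stdGauss t

lemma stdNormalCDF_nonneg (x : ℝ) : 0 ≤ stdNormalCDF x :=
  setIntegral_nonneg measurableSet_Iic fun t _ => (stdGauss_pos t).le

lemma stdNormalCDF_le (x : ℝ) : stdNormalCDF x ≤ stdGaussI :=
  setIntegral_le_integral integrable_stdGauss (Filter.Eventually.of_forall fun t => (stdGauss_pos t).le)

lemma tendsto_stdNormalCDF_atTop : Tendsto stdNormalCDF atTop (nhds stdGaussI) := by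
  have h := tendsto_setIntegral_of_monotone (μ := volume) (f := stdGauss)
    (s := fun x : ℝ => Iic x) (fun x => measurableSet_Iic)
    (fun a b hab => Iic_subset_Iic.2 hab)
    (by rw [iUnion_Iic]; exact integrable_stdGauss.integrableOn)
  show Tendsto (fun x => ∫ t in Iic x, stdGauss t) atTop _
  simpa [iUnion_Iic, stdGaussI, setIntegral_univ] using h

lemma tendsto_stdNormalCDF_atBot : Tendsto stdNormalCDF atBot (nhds 0) := by
  have h := tendsto_setIntegral_of_antitone (μ := volume) (f := stdGauss)
    (s := fun x : ℝ => Iic (-x)) (fun x => measurableSet_Iic)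
    (fun a b hab => Iic_subset_Iic.2 (neg_le_neg hab))
    ⟨0, integrable_stdGauss.integrableOn⟩
  have hempty : ⋂ x : ℝ, Iic (-x) = ∅ := by
    ext t
    simp only [mem_iInter, mem_Iic, mem_empty_iff_false, iff_false, not_forall]
    exact ⟨-(t - 1), by push_neg; norm_num⟩
  rw [hempty] at h
  simp only [Measure.restrict_empty, integral_zero_measure] at h
  have := h.comp (tendsto_neg_atBot_atTop)
  have heq : ((fun i => ∫ (x : ℝ) in Iic (-i), stdGauss x) ∘ Neg.neg) = stdNormalCDF := by
    funext y; simp [Function.comp, stdNormalCDF_eq]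
  rwa [heq] at this
lemma stdGauss_even (t : ℝ) : stdGauss (-t) = stdGauss t := by
  unfold stdGauss; rw [neg_pow, show ((-1:ℝ))^2 = 1 by norm_num, one_mul]

lemma stdNormalCDF_neg (x : ℝ) : stdNormalCDF (-x) = stdGaussI - stdNormalCDF x := by
  have h1 : stdNormalCDF (-x) = ∫ t in Ioi x, stdGauss t := by
    have := integral_comp_neg_Iic (-x) stdGauss
    simp only [stdGauss_even, neg_neg] at this
    rw [stdNormalCDF_eq, this]
  have h2 := intervalIntegral.integral_Iic_add_Ioi (b := x) (μ := volume) (f := stdGauss)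
    integrable_stdGauss.integrableOn integrable_stdGauss.integrableOn
  rw [← stdNormalCDF_eq] at h2
  rw [h1, stdGaussI, ← h2]
  ring
noncomputable def critSq (s s' : ℝ) : ℝ := 2 * Real.log (s'/s) * (s^2*s'^2) / (s'^2 - s^2)

lemma critSq_pos {s s' : ℝ} (hs : 0 < s) (hss' : s < s') : 0 < critSq s s' := by
  have h1 : 0 < Real.log (s'/s) := Real.log_pos (by rw [lt_div_iff₀ hs]; linarith)
  have h2 : 0 < s'^2 - s^2 := by nlinarith
  have : 0 < s' := hs.trans hss'
  unfold critSq; positivity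

lemma stdGauss_scale_lt_iff {s s' : ℝ} (hs : 0 < s) (hss' : s < s') (u : ℝ) :
    (stdGauss (u / s) / s < stdGauss (u / s') / s' ↔ critSq s s' < u^2) ∧
    (stdGauss (u / s') / s' < stdGauss (u / s) / s ↔ u^2 < critSq s s') := by
  have hs' : 0 < s' := hs.trans hss'
  have hC : 0 < Real.sqrt (2 * Real.pi) := Real.sqrt_pos.2 (by positivity)
  have hsq : 0 < s'^2 - s^2 := by nlinarith
  set A : ℝ := -(u/s)^2/2 with hA
  set B : ℝ := -(u/s')^2/2 with hB
  have e1 : stdGauss (u/s) / s = Real.exp A / (Real.sqrt (2*Real.pi) * s) := by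
    unfold stdGauss; rw [div_div]
  have e2 : stdGauss (u/s') / s' = Real.exp B / (Real.sqrt (2*Real.pi) * s') := by
    unfold stdGauss; rw [div_div]
  have key : ∀ P Q x y : ℝ, 0 < x → 0 < y →
      (Real.exp P / (Real.sqrt (2*Real.pi) * x) < Real.exp Q / (Real.sqrt (2*Real.pi) * y)
        ↔ P + Real.log y < Q + Real.log x) := by
    intro P Q x y hx hy
    rw [div_lt_div_iff₀ (by positivity) (by positivity)]
    rw [show Real.exp P * (Real.sqrt (2*Real.pi) * y) = Real.sqrt (2*Real.pi) * (Real.exp P * y) by ring,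
        show Real.exp Q * (Real.sqrt (2*Real.pi) * x) = Real.sqrt (2*Real.pi) * (Real.exp Q * x) by ring,
        mul_lt_mul_iff_right₀ hC]
    rw [← Real.log_lt_log_iff (mul_pos (Real.exp_pos _) hy) (mul_pos (Real.exp_pos _) hx),
        Real.log_mul (Real.exp_ne_zero _) hy.ne',
        Real.log_mul (Real.exp_ne_zero _) hx.ne', Real.log_exp, Real.log_exp]
  have hdiff : B - A = u^2 * ((s'^2 - s^2)/(2*s^2*s'^2)) := by
    rw [hA, hB]; field_simp; ring
  have hlog : Real.log (s'/s) = Real.log s' - Real.log s := Real.log_div hs'.ne' hs.ne'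
  have hcrit : critSq s s' = (Real.log s' - Real.log s) / ((s'^2 - s^2)/(2*s^2*s'^2)) := by
    unfold critSq; rw [hlog]; field_simp
  have hkpos : 0 < (s'^2 - s^2)/(2*s^2*s'^2) := by positivity
  constructor
  · rw [e1, e2, key A B s s' hs hs']
    rw [show (A + Real.log s' < B + Real.log s) ↔ (Real.log s' - Real.log s < B - A) by constructor <;> intro <;> linarith]
    rw [hdiff, hcrit, div_lt_iff₀ hkpos]
  · rw [e1, e2, key B A s' s hs' hs]
    rw [show (B + Real.log s < A + Real.log s') ↔ (B - A < Real.log s' - Real.log s) by constructor <;> intro <;> linarith]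
    rw [hdiff, hcrit, lt_div_iff₀ hkpos]
noncomputable def gapFn (s s' u : ℝ) : ℝ := stdNormalCDF (u/s') - stdNormalCDF (u/s)

lemma hasDerivAt_gapFn (hs : 0 < s) (hs' : 0 < s') (u : ℝ) :
    HasDerivAt (gapFn s s') (stdGauss (u/s')/s' - stdGauss (u/s)/s) u := by
  have h1 : HasDerivAt (fun v : ℝ => stdNormalCDF (v/s')) (stdGauss (u/s') * (1/s')) u :=
    by have := (hasDerivAt_stdNormalCDF (u/s')).comp u ((hasDerivAt_id' (x := u)).div_const s'); exact this
  have h2 : HasDerivAt (fun v : ℝ => stdNormalCDF (v/s)) (stdGauss (u/s) * (1/s)) u :=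
    by have := (hasDerivAt_stdNormalCDF (u/s)).comp u ((hasDerivAt_id' (x := u)).div_const s); exact this
  have := h1.sub h2
  show HasDerivAt (fun v => stdNormalCDF (v/s') - stdNormalCDF (v/s)) _ u
  exact this.congr_deriv (by ring)

lemma continuous_gapFn : Continuous (gapFn s s') := by
  unfold gapFn
  exact (continuous_stdNormalCDF.comp (continuous_id.div_const _)).sub
    (continuous_stdNormalCDF.comp (continuous_id.div_const _))

lemma deriv_gapFn (hs : 0 < s) (hs' : 0 < s') (u : ℝ) :
    deriv (gapFn s s') u = stdGauss (u/s')/s' - stdGauss (u/s)/s :=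
  (hasDerivAt_gapFn hs hs' u).deriv

lemma gapFn_strictMonoOn (hs : 0 < s) (hss' : s < s') :
    StrictMonoOn (gapFn s s') (Iic (-(Real.sqrt (critSq s s')))) := by
  have hs' := hs.trans hss'
  apply strictMonoOn_of_deriv_pos (convex_Iic _) continuous_gapFn.continuousOn
  intro u hu
  rw [interior_Iic, mem_Iio] at hu
  rw [deriv_gapFn hs hs', sub_pos]
  apply ((stdGauss_scale_lt_iff hs hss' u).1).2
  have h0 : 0 ≤ Real.sqrt (critSq s s') := Real.sqrt_nonneg _
  nlinarith [Real.sq_sqrt (critSq_pos hs hss').le]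

lemma gapFn_strictAntiOn (hs : 0 < s) (hss' : s < s') :
    StrictAntiOn (gapFn s s') (Icc (-(Real.sqrt (critSq s s'))) 0) := by
  have hs' := hs.trans hss'
  apply strictAntiOn_of_deriv_neg (convex_Icc _ _) continuous_gapFn.continuousOn
  intro u hu
  rw [interior_Icc, mem_Ioo] at hu
  rw [deriv_gapFn hs hs', sub_neg]
  apply ((stdGauss_scale_lt_iff hs hss' u).2).2
  have h0 : 0 ≤ Real.sqrt (critSq s s') := Real.sqrt_nonneg _
  nlinarith [Real.sq_sqrt (critSq_pos hs hss').le]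

lemma gapFn_neg_of_pos (hs : 0 < s) (hss' : s < s') {u : ℝ} (hu : 0 < u) :
    gapFn s s' u < 0 := by
  have hs' := hs.trans hss'
  apply sub_neg.2
  exact strictMono_stdNormalCDF (div_lt_div_of_pos_left hu hs hss')

lemma gapFn_pos_of_neg (hs : 0 < s) (hss' : s < s') {u : ℝ} (hu : u < 0) :
    0 < gapFn s s' u := by
  have hs' := hs.trans hss'
  apply sub_pos.2
  apply strictMono_stdNormalCDF
  rw [div_lt_div_iff₀ hs hs']
  nlinarith

lemma gapFn_odd (u : ℝ) : gapFn s s' (-u) = - gapFn s s' u := by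
  unfold gapFn
  rw [neg_div, neg_div, stdNormalCDF_neg, stdNormalCDF_neg]
  ring

lemma gapFn_lt_max (hs : 0 < s) (hss' : s < s') {u : ℝ}
    (hu : u ≠ -(Real.sqrt (critSq s s'))) :
    gapFn s s' u < gapFn s s' (-(Real.sqrt (critSq s s'))) := by
  have hc := critSq_pos hs hss'
  have hu0 : 0 < Real.sqrt (critSq s s') := Real.sqrt_pos.2 hc
  rcases lt_trichotomy u (-(Real.sqrt (critSq s s'))) with h | h | h
  · exact gapFn_strictMonoOn hs hss' (mem_Iic.2 h.le) (mem_Iic.2 le_rfl) h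
  · exact absurd h hu
  · rcases le_or_gt u 0 with h2 | h2
    · exact gapFn_strictAntiOn hs hss' ⟨le_refl _, by linarith⟩ ⟨by linarith, h2⟩ h
    · exact (gapFn_neg_of_pos hs hss' h2).trans (gapFn_pos_of_neg hs hss' (by linarith))

lemma gapFn_le_max (hs : 0 < s) (hss' : s < s') (u : ℝ) :
    gapFn s s' u ≤ gapFn s s' (-(Real.sqrt (critSq s s'))) := by
  rcases eq_or_ne u (-(Real.sqrt (critSq s s'))) with h | h
  · rw [h]
  · exact (gapFn_lt_max hs hss' h).le

lemma gapFn_max_pos (hs : 0 < s) (hss' : s < s') :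
    0 < gapFn s s' (-(Real.sqrt (critSq s s'))) :=
  gapFn_pos_of_neg hs hss' (neg_neg_iff_pos.2 (Real.sqrt_pos.2 (critSq_pos hs hss')))

lemma gapFn_gt_min (hs : 0 < s) (hss' : s < s') {u : ℝ}
    (hu : u ≠ Real.sqrt (critSq s s')) :
    -(gapFn s s' (-(Real.sqrt (critSq s s')))) < gapFn s s' u := by
  have := gapFn_lt_max hs hss' (u := -u) (fun h => hu (neg_injective h))
  rw [gapFn_odd] at this
  linarith

lemma gapFn_ge_min (hs : 0 < s) (hss' : s < s') (u : ℝ) :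
    -(gapFn s s' (-(Real.sqrt (critSq s s')))) ≤ gapFn s s' u := by
  rcases eq_or_ne u (Real.sqrt (critSq s s')) with h | h
  · have ho := gapFn_odd (s := s) (s' := s') (Real.sqrt (critSq s s'))
    rw [h]; linarith
  · exact (gapFn_gt_min hs hss' h).le

lemma abs_gapFn_le (hs : 0 < s) (hss' : s < s') (u : ℝ) :
    |gapFn s s' u| ≤ gapFn s s' (-(Real.sqrt (critSq s s'))) :=
  abs_le.2 ⟨gapFn_ge_min hs hss' u, gapFn_le_max hs hss' u⟩

lemma tendsto_gapFn_atTop (hs : 0 < s) (hs' : 0 < s') :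
    Tendsto (gapFn s s') atTop (nhds 0) := by
  have h1 : Tendsto (fun u : ℝ => stdNormalCDF (u/s')) atTop (nhds stdGaussI) :=
    tendsto_stdNormalCDF_atTop.comp (tendsto_id.atTop_div_const hs')
  have h2 : Tendsto (fun u : ℝ => stdNormalCDF (u/s)) atTop (nhds stdGaussI) :=
    tendsto_stdNormalCDF_atTop.comp (tendsto_id.atTop_div_const hs)
  show Tendsto (fun u => stdNormalCDF (u/s') - stdNormalCDF (u/s)) _ _
  simpa using h1.sub h2

lemma tendsto_gapFn_atBot (hs : 0 < s) (hs' : 0 < s') :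
    Tendsto (gapFn s s') atBot (nhds 0) := by
  have h1 : Tendsto (fun u : ℝ => stdNormalCDF (u/s')) atBot (nhds 0) :=
    tendsto_stdNormalCDF_atBot.comp (tendsto_id.atBot_div_const hs')
  have h2 : Tendsto (fun u : ℝ => stdNormalCDF (u/s)) atBot (nhds 0) :=
    tendsto_stdNormalCDF_atBot.comp (tendsto_id.atBot_div_const hs)
  show Tendsto (fun u => stdNormalCDF (u/s') - stdNormalCDF (u/s)) _ _
  simpa using h1.sub h2

/-- For similar blocks of the first kind and `B ≥ 3`, the KS distance between
the residual-transformed mixtures `(1/(B−1)) Σ_k N(km, 2(σ²+τ²))` and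
`(1/(B−1)) Σ_k N(km, 2σ²)` is strictly less than the KS distance between the
delta-transformed Gaussians `N(m, 2(σ²+τ²))` and `N(m, 2σ²)`. -/
theorem ks_residual_lt_delta_first_kind (σ τ m : ℝ) (hσ : 0 < σ) (hτ : 0 < τ)
    (hm : 0 < m) (B : ℕ) (hB : 3 ≤ B) :
    let s' : ℝ := Real.sqrt (2 * (σ ^ 2 + τ ^ 2))
    let s : ℝ := Real.sqrt (2 * σ ^ 2)
    let Fr : ℝ → ℝ := fun x => (1 / ((B : ℝ) - 1)) *
      ∑ k ∈ Finset.Icc 1 (B - 1), stdNormalCDF ((x - k * m) / s')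
    let Gr : ℝ → ℝ := fun x => (1 / ((B : ℝ) - 1)) *
      ∑ k ∈ Finset.Icc 1 (B - 1), stdNormalCDF ((x - k * m) / s)
    (⨆ x : ℝ, |Fr x - Gr x|) <
      ⨆ x : ℝ, |stdNormalCDF ((x - m) / s') - stdNormalCDF ((x - m) / s)| := by
  intro s' s Fr Gr
  have hs : 0 < s := Real.sqrt_pos.2 (by positivity)
  have hs' : 0 < s' := Real.sqrt_pos.2 (by positivity)
  have hss' : s < s' := Real.sqrt_lt_sqrt (by positivity) (by nlinarith)
  set u₀ : ℝ := Real.sqrt (critSq s s') with hu₀def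
  set D : ℝ := gapFn s s' (-u₀) with hDdef
  have hD : 0 < D := gapFn_max_pos hs hss'
  have hu₀ : 0 < u₀ := Real.sqrt_pos.2 (critSq_pos hs hss')
  set S : ℝ → ℝ := fun x => ∑ k ∈ Finset.Icc 1 (B - 1), gapFn s s' (x - k * m) with hSdef
  -- rewrite Fr - Gr
  have hFG : ∀ x, Fr x - Gr x = (1 / ((B : ℝ) - 1)) * S x := by
    intro x
    simp only [Fr, Gr, hSdef, gapFn, ← mul_sub, Finset.sum_sub_distrib]
  have hcard : (Finset.Icc 1 (B - 1)).card = B - 1 := by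
    rw [Nat.card_Icc]; omega
  have hcast : ((B - 1 : ℕ) : ℝ) = (B : ℝ) - 1 := by
    have : (1 : ℕ) ≤ B := by omega
    push_cast [Nat.cast_sub this]; ring
  have hB1 : (0 : ℝ) < (B : ℝ) - 1 := by
    have : (3 : ℝ) ≤ (B : ℝ) := by exact_mod_cast hB
    linarith
  -- continuity and decay of S
  have hcontS : Continuous S := by
    apply continuous_finset_sum
    intro k _
    exact continuous_gapFn.comp (continuous_id.sub continuous_const)
  have htendTop : Tendsto S atTop (nhds 0) := by
    have : Tendsto S atTop (nhds (∑ k ∈ Finset.Icc 1 (B - 1), (0 : ℝ))) := by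
      apply tendsto_finset_sum
      intro k _
      exact (tendsto_gapFn_atTop hs hs').comp
        (tendsto_atTop_add_const_right atTop (-(k * m)) tendsto_id |>.congr
          (fun x => by simp only [id_eq]; ring))
    simpa using this
  have htendBot : Tendsto S atBot (nhds 0) := by
    have : Tendsto S atBot (nhds (∑ k ∈ Finset.Icc 1 (B - 1), (0 : ℝ))) := by
      apply tendsto_finset_sum
      intro k _
      exact (tendsto_gapFn_atBot hs hs').comp
        (tendsto_atBot_add_const_right atBot (-(k * m)) tendsto_id |>.congr
          (fun x => by simp only [id_eq]; ring))
    simpa using this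
  have htendCo : Tendsto (fun x => |S x|) (cocompact ℝ) (nhds 0) := by
    rw [cocompact_eq_atBot_atTop, tendsto_sup]
    constructor
    · simpa using htendBot.abs
    · simpa using htendTop.abs
  -- obtain global maximum of |S|
  have hexists : ∃ x0, ∀ x, |S x| ≤ |S x0| := by
    by_cases hz : ∀ x, S x = 0
    · exact ⟨0, fun x => by rw [hz x, hz 0]⟩
    · push_neg at hz
      obtain ⟨x₁, hx₁⟩ := hz
      have hev : ∀ᶠ x in cocompact ℝ, |S x| ≤ |S x₁| := by
        filter_upwards [htendCo.eventually_lt_const (abs_pos.2 hx₁)] with x hx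
        exact hx.le
      exact (continuous_abs.comp hcontS).exists_forall_ge' x₁ hev
  obtain ⟨x0, hx0⟩ := hexists
  -- strict bound |S x0| < (B-1) * D
  have hmem2 : 2 ∈ Finset.Icc 1 (B - 1) := by
    rw [Finset.mem_Icc]; omega
  have hmem1 : 1 ∈ Finset.Icc 1 (B - 1) := by
    rw [Finset.mem_Icc]; omega
  have hSum_lt : S x0 < ((B : ℝ) - 1) * D := by
    have hlt : ∃ k ∈ Finset.Icc 1 (B - 1), gapFn s s' (x0 - k * m) < D := by
      by_cases h1 : x0 - (1 : ℕ) * m = -u₀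
      · refine ⟨2, hmem2, gapFn_lt_max hs hss' ?_⟩
        intro h2
        push_cast at h1 h2
        linarith
      · exact ⟨1, hmem1, gapFn_lt_max hs hss' h1⟩
    have := Finset.sum_lt_sum (f := fun k : ℕ => gapFn s s' (x0 - k * m))
      (g := fun _ : ℕ => D) (fun k _ => gapFn_le_max hs hss' (x0 - k * m)) hlt
    rw [Finset.sum_const, hcard, nsmul_eq_mul, hcast] at this
    exact this
  have hSum_gt : -(((B : ℝ) - 1) * D) < S x0 := by
    have hlt : ∃ k ∈ Finset.Icc 1 (B - 1), -D < gapFn s s' (x0 - k * m) := by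
      by_cases h1 : x0 - (1 : ℕ) * m = u₀
      · refine ⟨2, hmem2, gapFn_gt_min hs hss' ?_⟩
        intro h2
        push_cast at h1 h2
        linarith
      · exact ⟨1, hmem1, gapFn_gt_min hs hss' h1⟩
    obtain ⟨k₀, hk₀, hk₀lt⟩ := hlt
    have := Finset.sum_lt_sum (f := fun k : ℕ => -D)
      (g := fun k : ℕ => gapFn s s' (x0 - k * m))
      (fun k _ => gapFn_ge_min hs hss' (x0 - k * m)) ⟨k₀, hk₀, hk₀lt⟩
    rw [Finset.sum_const, hcard, nsmul_eq_mul, hcast] at this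
    linarith
  have habs : |S x0| < ((B : ℝ) - 1) * D := abs_lt.2 ⟨hSum_gt, hSum_lt⟩
  -- RHS is at least D
  have hRHSbdd : BddAbove (Set.range fun x : ℝ =>
      |stdNormalCDF ((x - m) / s') - stdNormalCDF ((x - m) / s)|) := by
    refine ⟨D, ?_⟩
    rintro _ ⟨x, rfl⟩
    exact abs_gapFn_le hs hss' (x - m)
  have hRHS : D ≤ ⨆ x : ℝ, |stdNormalCDF ((x - m) / s') - stdNormalCDF ((x - m) / s)| := by
    have := le_ciSup hRHSbdd (m - u₀)
    calc D = |gapFn s s' (m - u₀ - m)| := by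
              rw [show m - u₀ - m = -u₀ by ring, abs_of_pos hD]
      _ ≤ _ := this
  -- LHS bound
  have hLHS : (⨆ x : ℝ, |Fr x - Gr x|) ≤ (1 / ((B : ℝ) - 1)) * |S x0| := by
    apply ciSup_le
    intro x
    rw [hFG x, abs_mul, abs_of_pos (by positivity : (0:ℝ) < 1 / ((B : ℝ) - 1))]
    exact mul_le_mul_of_nonneg_left (hx0 x) (by positivity)
  have hfinal : (1 / ((B : ℝ) - 1)) * |S x0| < D := by
    rw [div_mul_eq_mul_div, one_mul, div_lt_iff₀ hB1]
    linarith [habs]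
  exact lt_of_le_of_lt hLHS (lt_of_lt_of_le hfinal hRHS)
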